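/- Let k ≥ 1 and let q_n denote the denominator of the n-th convergent of α_k = [\overline{1_{2k−1}, 2}]. Then for all sufficiently large m, setting n = 2km − 2, one has q_{n+1} · ‖q_n·α_k‖ < D_k. -/

import Mathlib

open Filter Real

/-- Distance from a real number to the nearest integer. -/
noncomputable def intDist (ξ : ℝ) : ℝ := |ξ - round ξ|

/-- Irrationality measure function `ψ_α(t) = min {‖qα‖ : q ∈ ℤ, 1 ≤ q ≤ t}`. -/
noncomputable def psi (α : ℝ) (t : ℝ) : ℝ :=
  sInf {x : ℝ | ∃ q : ℤ, 1 ≤ q ∧ (q : ℝ) ≤ t ∧ x = intDist ((q : ℝ) * α)}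

/-- `f₀(x) = (√5 + 1)/(√5 + √(5 - 4/x²))`. -/
noncomputable def f0 (x : ℝ) : ℝ :=
  (Real.sqrt 5 + 1) / (Real.sqrt 5 + Real.sqrt (5 - 4 / x ^ 2))

/-- Value of a finite regular continued fraction `[a₀; a₁, …, aₙ]`. -/
noncomputable def cfVal : List ℤ → ℝ
  | [] => 0
  | [a] => (a : ℝ)
  | a :: b :: l => (a : ℝ) + 1 / cfVal (b :: l)

/-- The list `[a 0, a 1, …, a n]`. -/
def cfList (a : ℕ → ℤ) (n : ℕ) : List ℤ := (List.range (n + 1)).map a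

/-- `α` is the value of the infinite continued fraction with partial quotients `a`,
i.e. the convergents `[a₀; a₁, …, aₙ]` tend to `α`. -/
def IsCFExp (a : ℕ → ℤ) (α : ℝ) : Prop :=
  Filter.Tendsto (fun n => cfVal (cfList a n)) Filter.atTop (nhds α)

/-- Denominators `q_n` of the convergents of the continued fraction with
partial quotients `a` : `q₀ = 1`, `q₁ = a₁`, `q_{n+2} = a_{n+2} q_{n+1} + q_n`. -/
def cfDen (a : ℕ → ℤ) : ℕ → ℤ
  | 0 => 1
  | 1 => a 1
  | n + 2 => a (n + 2) * cfDen a (n + 1) + cfDen a n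

/-- Partial quotients of `α_k = [overline{1_{2k-1}, 2}]` (for `k = 0` this gives
the all-ones sequence, the expansion of the golden ratio `α₀ = φ`). -/
def aSeq (k : ℕ) (n : ℕ) : ℤ := if (n + 1) % (2 * k) = 0 then 2 else 1

/-- Partial quotients of `β_k = [0; 1_{k-1}, overline{2, 1_{2k-1}}]`. -/
def bSeq (k : ℕ) (n : ℕ) : ℤ :=
  if n = 0 then 0 else if n < k then 1 else if (n - k) % (2 * k) = 0 then 2 else 1

/-- Partial quotients of `β_k^{(1)} = [0; 1_k, overline{2, 1_{2k-1}}]`. -/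
def b1Seq (k : ℕ) (n : ℕ) : ℤ :=
  if n = 0 then 0 else if n < k + 1 then 1
  else if (n - (k + 1)) % (2 * k) = 0 then 2 else 1

/-- Partial quotients of `β_k^{(2)} = [0; 1_{k-2}, overline{2, 1_{2k-1}}]`. -/
def b2Seq (k : ℕ) (n : ℕ) : ℤ :=
  if n = 0 then 0 else if n < k - 1 then 1
  else if (n - (k - 1)) % (2 * k) = 0 then 2 else 1

/-- `D_k = (2α_k + 1)/(2α_k + 2)` as a function of `α_k`. -/
noncomputable def Dk (αk : ℝ) : ℝ := (2 * αk + 1) / (2 * αk + 2)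

/-- `g_k(x) = 2D_k/(1 + √(1 - 4D_k(1-D_k)/x²))` as a function of `α_k`. -/
noncomputable def gFun (αk : ℝ) (x : ℝ) : ℝ :=
  2 * Dk αk / (1 + Real.sqrt (1 - 4 * Dk αk * (1 - Dk αk) / x ^ 2))

/-- `f_k` for odd `k`, as a function of `α_k` and `β_k`. -/
noncomputable def fOdd (αk βk : ℝ) (x : ℝ) : ℝ :=
  2 * Dk αk / (1 + Real.sqrt (1 - 2 * αk / ((2 * βk + 1) * (αk + 1) * x ^ 2)))

/-- `f_k` for even `k`, as a function of `α_k`, `β_k^{(1)}` and `β_k^{(2)}`. -/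
noncomputable def fEven (αk β1 β2 : ℝ) (x : ℝ) : ℝ :=
  2 * Dk αk / (1 + Real.sqrt (1 - 2 * αk / ((β1 + β2 + 1) * (αk + 1) * x ^ 2)))

/-- The block `(1_{2k-1}, 2)` of partial quotients. -/
def block (k : ℕ) : List ℤ := List.replicate (2 * k - 1) 1 ++ [2]

/-- `m` repetitions of the block `(1_{2k-1}, 2)`. -/
def blocks (k : ℕ) : ℕ → List ℤ
  | 0 => []
  | m + 1 => block k ++ blocks k m

/-- Partial quotients of the finite continued fraction `[0; 1_{s-1}, 2, (1_{2k-1}, 2)^m]`. -/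
def wFin (k m s : ℕ) : List ℤ := 0 :: (List.replicate (s - 1) 1 ++ [2] ++ blocks k m)

/-- Partial quotients of `[1; 1_{2k-s-1}, overline{2, 1_{2k-1}}]` (for `1 ≤ s ≤ 2k-1`). -/
def wSeq (k s : ℕ) (n : ℕ) : ℤ :=
  if n = 0 then 1
  else if n < 2 * k - s then 1
  else if (n - (2 * k - s)) % (2 * k) = 0 then 2 else 1

/-- Partial quotients of `γ = [overline{2, 1_{2k-1}}]`. -/
def gSeq (k : ℕ) (n : ℕ) : ℤ := if n % (2 * k) = 0 then 2 else 1

/-- Partial quotients of the finite continued fraction `[0; (1_{2k-1}, 2)^{m+1}]`. -/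
def topFin (k m : ℕ) : List ℤ := 0 :: blocks k (m + 1)

/-- Partial quotients of `1/α_k = [0; overline{1_{2k-1}, 2}]`. -/
def invSeq (k : ℕ) (n : ℕ) : ℤ := if n = 0 then 0 else if n % (2 * k) = 0 then 2 else 1


def mc (l : List ℤ) : List ℝ := l.map Int.cast

theorem mc_nil : mc [] = [] := rfl
theorem mc_cons (x : ℤ) (l : List ℤ) : mc (x :: l) = (x : ℝ) :: mc l := rfl
theorem mc_append (l m : List ℤ) : mc (l ++ m) = mc l ++ mc m := List.map_append
theorem mc_singleton (x : ℤ) : mc [x] = [(x : ℝ)] := rfl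
theorem mc_ne_nil {l : List ℤ} (h : l ≠ []) : mc l ≠ [] := by
  cases l with
  | nil => exact absurd rfl h
  | cons b l' => simp [mc]

noncomputable def rcf : List ℝ → ℝ
  | [] => 0
  | [a] => a
  | a :: b :: l => a + 1 / rcf (b :: l)

theorem rcf_cons (x : ℝ) (m : List ℝ) (hm : m ≠ []) :
    rcf (x :: m) = x + 1 / rcf m := by
  cases m with
  | nil => simp at hm
  | cons b l => rfl

theorem cfVal_cons (x : ℤ) (m : List ℤ) (hm : m ≠ []) :
    cfVal (x :: m) = (x : ℝ) + 1 / cfVal m := by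
  cases m with
  | nil => simp at hm
  | cons b l => rfl

theorem cfVal_eq_rcf : ∀ l : List ℤ, cfVal l = rcf (mc l)
  | [] => rfl
  | [a] => rfl
  | a :: b :: l => by
      rw [cfVal, mc_cons, mc_cons, rcf, ← mc_cons, cfVal_eq_rcf (b :: l)]

theorem rcf_ge_one : ∀ l : List ℝ, l ≠ [] → (∀ x ∈ l, 1 ≤ x) → 1 ≤ rcf l
  | [], h, _ => absurd rfl h
  | [a], _, h => by simpa [rcf] using h a (by simp)
  | a :: b :: l, _, h => by
      have hb : 1 ≤ rcf (b :: l) :=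
        rcf_ge_one (b :: l) (by simp) (fun x hx => h x (by simp [hx]))
      have h0 : 0 < rcf (b :: l) := lt_of_lt_of_le one_pos hb
      have ha : 1 ≤ a := h a (by simp)
      rw [rcf]
      have : 0 ≤ 1 / rcf (b :: l) := by positivity
      linarith

theorem rcf_append : ∀ (l m : List ℝ), m ≠ [] → rcf (l ++ m) = rcf (l ++ [rcf m])
  | [], m, hm => by
      cases m with
      | nil => simp at hm
      | cons b l' => simp [rcf]
  | [a], m, hm => by
      rw [List.singleton_append, List.singleton_append, rcf_cons a m hm,
        rcf_cons a [rcf m] (by simp)]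
      simp [rcf]
  | a :: c :: l, m, hm => by
      have h1 := rcf_append (c :: l) m hm
      show rcf (a :: (c :: l ++ m)) = rcf (a :: (c :: l ++ [rcf m]))
      rw [rcf_cons a _ (by simp), rcf_cons a _ (by simp), h1]

def Pc (a : ℕ → ℤ) : ℕ → ℤ
  | 0 => 1
  | 1 => a 0
  | n + 2 => a (n + 1) * Pc a (n + 1) + Pc a n

def Qc (a : ℕ → ℤ) : ℕ → ℤ
  | 0 => 0
  | 1 => 1
  | n + 2 => a (n + 1) * Qc a (n + 1) + Qc a n

theorem Qc_nonneg_pos (a : ℕ → ℤ) (ha : ∀ i, 1 ≤ a i) :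
    ∀ n, 0 ≤ Qc a n ∧ 1 ≤ Qc a (n + 1) := by
  intro n
  induction n with
  | zero => exact ⟨le_refl 0, le_refl 1⟩
  | succ n ih =>
      refine ⟨le_trans zero_le_one ih.2, ?_⟩
      have h := ha (n + 1)
      show 1 ≤ a (n + 1) * Qc a (n + 1) + Qc a n
      nlinarith [ih.1, ih.2]

theorem Qc_pos (a : ℕ → ℤ) (ha : ∀ i, 1 ≤ a i) (n : ℕ) : 1 ≤ Qc a (n + 1) :=
  (Qc_nonneg_pos a ha n).2

theorem Pc_pos (a : ℕ → ℤ) (ha : ∀ i, 1 ≤ a i) : ∀ n, 1 ≤ Pc a n := by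
  intro n
  induction n using Nat.twoStepInduction with
  | zero => exact le_refl 1
  | one => exact ha 0
  | more n ih1 ih2 =>
      have h := ha (n + 1)
      show 1 ≤ a (n + 1) * Pc a (n + 1) + Pc a n
      nlinarith

theorem cfList_zero (a : ℕ → ℤ) : cfList a 0 = [a 0] := by
  simp [cfList, List.range_succ]

theorem cfList_succ (a : ℕ → ℤ) (n : ℕ) :
    cfList a (n + 1) = cfList a n ++ [a (n + 1)] := by
  simp [cfList, List.range_succ]

theorem cfList_ne_nil (a : ℕ → ℤ) (n : ℕ) : cfList a n ≠ [] := by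
  simp [cfList, List.range_succ]

theorem det_eq (a : ℕ → ℤ) : ∀ n, Pc a (n + 1) * Qc a n - Pc a n * Qc a (n + 1) = (-1) ^ (n + 1)
  | 0 => by simp [Pc, Qc]
  | n + 1 => by
      have ih := det_eq a n
      show (a (n+1) * Pc a (n+1) + Pc a n) * Qc a (n+1)
          - Pc a (n+1) * (a (n+1) * Qc a (n+1) + Qc a n) = (-1) ^ (n + 2)
      rw [pow_succ]
      linear_combination (-1 : ℤ) * ih

theorem Qc_rec_cast (a : ℕ → ℤ) (N : ℕ) :
    (Qc a (N+2) : ℝ) = a (N+1) * Qc a (N+1) + Qc a N := by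
  rw [show Qc a (N+2) = a (N+1) * Qc a (N+1) + Qc a N from rfl]; push_cast; ring

theorem Pc_rec_cast (a : ℕ → ℤ) (N : ℕ) :
    (Pc a (N+2) : ℝ) = a (N+1) * Pc a (N+1) + Pc a N := by
  rw [show Pc a (N+2) = a (N+1) * Pc a (N+1) + Pc a N from rfl]; push_cast; ring

theorem L2 (a : ℕ → ℤ) (ha : ∀ i, 1 ≤ a i) : ∀ N (t : ℝ), 1 ≤ t →
    rcf (mc (cfList a N) ++ [t]) =
      (t * Pc a (N + 1) + Pc a N) / (t * Qc a (N + 1) + Qc a N) := by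
  intro N
  induction N with
  | zero =>
      intro t ht
      rw [cfList_zero, mc_singleton]
      have ht0 : (0:ℝ) < t := lt_of_lt_of_le one_pos ht
      show (a 0 : ℝ) + 1 / t = _
      simp only [Pc, Qc]
      push_cast
      field_simp
      ring
  | succ N ih =>
      intro t ht
      have ht0 : (0:ℝ) < t := lt_of_lt_of_le one_pos ht
      rw [cfList_succ, mc_append, mc_singleton, List.append_assoc]
      rw [rcf_append _ ([(a (N+1) : ℝ)] ++ [t]) (by simp)]
      have hr2 : rcf ([(a (N+1) : ℝ)] ++ [t]) = (a (N+1) : ℝ) + 1 / t := rfl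
      rw [hr2]
      have ha1 : (1:ℝ) ≤ (a (N+1) : ℝ) := by exact_mod_cast ha (N+1)
      have hta : (1:ℝ) ≤ (a (N+1) : ℝ) + 1 / t := by
        have h2 : (0:ℝ) < 1 / t := by positivity
        linarith
      rw [ih _ hta]
      have hQ1 : (1:ℝ) ≤ (Qc a (N+1) : ℝ) := by exact_mod_cast Qc_pos a ha N
      have hQ0 : (0:ℝ) ≤ (Qc a N : ℝ) := by exact_mod_cast (Qc_nonneg_pos a ha N).1
      have hQ2 : (1:ℝ) ≤ (Qc a (N+2) : ℝ) := by exact_mod_cast Qc_pos a ha (N+1)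
      have hd2 : t * (Qc a (N+2) : ℝ) + Qc a (N+1) > 0 := by nlinarith
      have hd1 : ((a (N+1) : ℝ) + 1 / t) * Qc a (N+1) + Qc a N > 0 := by nlinarith
      rw [div_eq_div_iff (ne_of_gt hd1) (ne_of_gt hd2), Qc_rec_cast, Pc_rec_cast]
      field_simp
      ring

theorem conv_eq (a : ℕ → ℤ) (ha : ∀ i, 1 ≤ a i) :
    ∀ N, cfVal (cfList a N) = (Pc a (N + 1) : ℝ) / (Qc a (N + 1))
  | 0 => by
      rw [cfList_zero]
      simp [cfVal, Pc, Qc]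
  | N + 1 => by
      rw [cfVal_eq_rcf, cfList_succ, mc_append, mc_singleton]
      rw [L2 a ha N ((a (N+1) : ℝ)) (by exact_mod_cast ha (N+1))]
      rw [Qc_rec_cast, Pc_rec_cast]




def Kc : List ℤ → ℤ
  | [] => 1
  | [a] => a
  | a :: b :: l => a * Kc (b :: l) + Kc l

theorem Kc_append_last : ∀ (l : List ℤ), l ≠ [] → ∀ x : ℤ,
    Kc (l ++ [x]) = x * Kc l + Kc l.dropLast
  | [a], _, x => by simp [Kc]; ring
  | [a, b], _, x => by simp [Kc]; ring
  | a :: b :: c :: l, _, x => by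
      have h1 := Kc_append_last (b :: c :: l) (by simp) x
      have h2 := Kc_append_last (c :: l) (by simp) x
      show Kc (a :: b :: (c :: l ++ [x])) = _
      rw [show Kc (a :: b :: (c :: l ++ [x]))
          = a * Kc (b :: (c :: l ++ [x])) + Kc (c :: l ++ [x]) from rfl]
      rw [show (b :: (c :: l ++ [x])) = (b :: c :: l) ++ [x] from rfl, h1, h2]
      rw [show (a :: b :: c :: l).dropLast = a :: (b :: c :: l).dropLast from rfl]
      rw [show (b :: c :: l).dropLast = b :: (c :: l).dropLast from rfl]
      rw [show Kc (a :: b :: (c :: l).dropLast)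
          = a * Kc (b :: (c :: l).dropLast) + Kc ((c :: l).dropLast) from rfl]
      rw [show Kc (a :: b :: c :: l) = a * Kc (b :: c :: l) + Kc (c :: l) from rfl]
      ring

theorem Kc_reverse : ∀ l : List ℤ, Kc l.reverse = Kc l
  | [] => rfl
  | [a] => rfl
  | a :: b :: l => by
      have h1 := Kc_reverse (b :: l)
      have h2 := Kc_reverse l
      rw [List.reverse_cons, Kc_append_last _ (by simp) a]
      rw [show (b :: l).reverse.dropLast = l.reverse from by
        rw [List.reverse_cons, List.dropLast_concat]]
      rw [h1, h2]
      rfl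
termination_by l => l.length


theorem Kc_cfList (a : ℕ → ℤ) : ∀ n, Kc (cfList a n) = Pc a (n + 1) := by
  intro n
  induction n using Nat.twoStepInduction with
  | zero => rw [cfList_zero]; rfl
  | one =>
      rw [cfList_succ, cfList_zero]
      show a 0 * a 1 + 1 = a 1 * a 0 + 1
      ring
  | more n ih1 ih2 =>
      rw [cfList_succ, Kc_append_last _ (cfList_ne_nil a (n+1)) (a (n+2)), ih2]
      rw [show (cfList a (n+1)).dropLast = cfList a n from by
        rw [cfList_succ]; exact List.dropLast_concat]
      rw [ih1]
      rfl

def Lb (a : ℕ → ℤ) (n : ℕ) : List ℤ := (List.range n).map (fun i => a (i + 1))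

theorem Lb_zero (a : ℕ → ℤ) : Lb a 0 = [] := rfl

theorem Lb_succ (a : ℕ → ℤ) (n : ℕ) : Lb a (n + 1) = Lb a n ++ [a (n + 1)] := by
  simp [Lb, List.range_succ]

theorem Kc_Lb (a : ℕ → ℤ) : ∀ n, Kc (Lb a n) = Qc a (n + 1) := by
  intro n
  induction n using Nat.twoStepInduction with
  | zero => rfl
  | one =>
      rw [Lb_succ, Lb_zero]
      show a 1 = a 1 * 1 + 0
      ring
  | more n ih1 ih2 =>
      have hne : Lb a (n + 1) ≠ [] := by rw [Lb_succ]; simp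
      rw [Lb_succ, Kc_append_last _ hne (a (n+2)), ih2]
      rw [show (Lb a (n+1)).dropLast = Lb a n from by
        rw [Lb_succ]; exact List.dropLast_concat]
      rw [ih1]
      rfl

theorem cfDen_eq_Qc (a : ℕ → ℤ) : ∀ n, cfDen a n = Qc a (n + 1)
  | 0 => rfl
  | 1 => by show a 1 = a 1 * 1 + 0; ring
  | n + 2 => by
      show a (n + 2) * cfDen a (n + 1) + cfDen a n = Qc a (n + 3)
      rw [cfDen_eq_Qc a (n + 1), cfDen_eq_Qc a n]
      rfl

/-- Palindrome: if `2k ∣ n₀ + 2` then the word `a₁ ⋯ a_{n₀}` reversed is `a₀ ⋯ a_{n₀-1}`. -/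
theorem palindrome (k : ℕ) (hk : 1 ≤ k) (n₀ : ℕ) (hn : 1 ≤ n₀)
    (hd : 2 * k ∣ n₀ + 2) :
    (Lb (aSeq k) n₀).reverse = cfList (aSeq k) (n₀ - 1) := by
  apply List.ext_getElem
  · simp [Lb, cfList]; omega
  · intro i h1 h2
    have hlen : (Lb (aSeq k) n₀).length = n₀ := by simp [Lb]
    have hi : i < n₀ := by simpa [Lb] using h1
    rw [List.getElem_reverse]
    simp only [Lb, cfList, List.getElem_map, List.getElem_range, List.length_map, List.length_range]
    have he : n₀ - 1 - i + 1 = n₀ - i := by omega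
    rw [he]
    -- aSeq k (n₀ - i) = aSeq k i
    have hkpos : 0 < 2 * k := by omega
    have key : ((n₀ - i) + 1) % (2 * k) = 0 ↔ (i + 1) % (2 * k) = 0 := by
      rw [← Nat.dvd_iff_mod_eq_zero, ← Nat.dvd_iff_mod_eq_zero]
      constructor
      · intro hA
        have := Nat.dvd_sub hd hA
        rwa [show n₀ + 2 - (n₀ - i + 1) = i + 1 from by omega] at this
      · intro hB
        have := Nat.dvd_sub hd hB
        rwa [show n₀ + 2 - (i + 1) = n₀ - i + 1 from by omega] at this
    by_cases hc : (i + 1) % (2 * k) = 0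
    · simp [aSeq, hc, key.mpr hc]
    · have hnc : ¬((n₀ - i) + 1) % (2 * k) = 0 := fun h => hc (key.mp h)
      simp [aSeq, hc, hnc]

theorem odd_conv_gt (a : ℕ → ℤ) (ha : ∀ i, 1 ≤ a i) (α : ℝ)
    (hc : Filter.Tendsto (fun N => (Pc a (N+1) : ℝ) / (Qc a (N+1))) Filter.atTop (nhds α))
    (N : ℕ) (hN : Odd N) : α < (Pc a (N+1) : ℝ) / (Qc a (N+1)) := by
  have step : ∀ M, Odd M → (Pc a (M+3) : ℝ) / (Qc a (M+3)) < (Pc a (M+1) : ℝ) / (Qc a (M+1)) := by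
    intro M hM
    have det := det_eq a (M+1)
    have hpow : (-1 : ℤ) ^ (M+2) = -1 := Odd.neg_one_pow (by obtain ⟨j, hj⟩ := hM; exact ⟨j+1, by omega⟩)
    have hint : Pc a (M+3) * Qc a (M+1) - Pc a (M+1) * Qc a (M+3) = -(a (M+2)) := by
      have e1 : Pc a (M+3) = a (M+2) * Pc a (M+2) + Pc a (M+1) := rfl
      have e2 : Qc a (M+3) = a (M+2) * Qc a (M+2) + Qc a (M+1) := rfl
      rw [e1, e2]
      linear_combination (a (M+2)) * det + (a (M+2)) * hpow
    have hq1 : (0:ℝ) < (Qc a (M+1) : ℝ) := by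
      have := Qc_pos a ha M; push_cast; exact_mod_cast lt_of_lt_of_le zero_lt_one (by exact_mod_cast this)
    have hq3 : (0:ℝ) < (Qc a (M+3) : ℝ) := by
      have := Qc_pos a ha (M+2); exact_mod_cast lt_of_lt_of_le zero_lt_one (by exact_mod_cast this)
    rw [div_lt_div_iff₀ hq3 hq1]
    have hR : (Pc a (M+3) : ℝ) * Qc a (M+1) - (Pc a (M+1) : ℝ) * Qc a (M+3) = -(a (M+2) : ℝ) := by
      exact_mod_cast congrArg (fun z : ℤ => (z : ℝ)) hint
    have ha2 : (1:ℝ) ≤ (a (M+2) : ℝ) := by exact_mod_cast ha (M+2)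
    linarith
  have htendg : Filter.Tendsto (fun i : ℕ => N + 2*i) Filter.atTop Filter.atTop :=
    Filter.tendsto_atTop_atTop.mpr fun b => ⟨b, fun i hi => by omega⟩
  have htend : Filter.Tendsto (fun i : ℕ => (Pc a (N + 2*i + 1) : ℝ) / (Qc a (N + 2*i + 1)))
      Filter.atTop (nhds α) := hc.comp htendg
  have hmono : ∀ i : ℕ, (Pc a (N + 2*(i+1) + 1) : ℝ) / (Qc a (N + 2*(i+1) + 1))
      < (Pc a (N + 2*i + 1) : ℝ) / (Qc a (N + 2*i + 1)) := by
    intro i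
    have hodd : Odd (N + 2*i) := by obtain ⟨j, hj⟩ := hN; exact ⟨j + i, by omega⟩
    have := step (N + 2*i) hodd
    have he : N + 2*(i+1) + 1 = (N + 2*i) + 3 := by ring
    rw [he]
    exact this
  have hanti : Antitone (fun i : ℕ => (Pc a (N + 2*i + 1) : ℝ) / (Qc a (N + 2*i + 1))) :=
    antitone_nat_of_succ_le fun i => (hmono i).le
  have h1 : α ≤ (Pc a (N + 2*1 + 1) : ℝ) / (Qc a (N + 2*1 + 1)) :=
    le_of_tendsto htend (Filter.eventually_atTop.mpr ⟨1, fun i hi => hanti hi⟩)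
  have h0 := hmono 0
  norm_num at h0 h1
  linarith


/-- Let `k ≥ 1` and `q_n` the denominators of the convergents of
`α_k = [overline{1_{2k−1}, 2}]`. For all sufficiently large `m`, with `n = 2km − 2`,
one has `q_{n+1}·‖q_n·α_k‖ < D_k`. -/
theorem dirichlet_discrete_stmt16 (k : ℕ) (hk : 1 ≤ k) (αk : ℝ)
    (hαk : IsCFExp (aSeq k) αk) :
    ∀ᶠ m : ℕ in atTop,
      (cfDen (aSeq k) (2 * k * m - 2 + 1) : ℝ) *
          intDist ((cfDen (aSeq k) (2 * k * m - 2) : ℝ) * αk) < Dk αk := by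
  have ha : ∀ i, 1 ≤ aSeq k i := by intro i; unfold aSeq; split <;> norm_num
  set g : ℕ → ℤ := fun i => if i % (2*k) = 0 then 2 else 1 with hg_def
  have hg : ∀ i, (1 : ℤ) ≤ g i := by intro i; rw [hg_def]; dsimp only; split <;> norm_num
  have hαk' : Filter.Tendsto (fun n => cfVal (cfList (aSeq k) n)) Filter.atTop (nhds αk) := hαk
  have hconv : Filter.Tendsto (fun N => (Pc (aSeq k) (N+1) : ℝ) / (Qc (aSeq k) (N+1)))
      Filter.atTop (nhds αk) := hαk'.congr fun N => conv_eq (aSeq k) ha N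
  have hα1 : 1 ≤ αk := by
    refine ge_of_tendsto hαk' (Filter.Eventually.of_forall fun n => ?_)
    rw [cfVal_eq_rcf]
    refine rcf_ge_one _ (mc_ne_nil (cfList_ne_nil _ _)) fun x hx => ?_
    simp only [mc, cfList, List.map_map, List.mem_map, List.mem_range] at hx
    obtain ⟨j, _, rfl⟩ := hx
    show (1:ℝ) ≤ ((aSeq k j : ℤ) : ℝ)
    exact_mod_cast ha j
  have hα0 : 0 < αk := lt_of_lt_of_le one_pos hα1
  have hgshift : ∀ i, g (i+1) = aSeq k i := fun i => rfl
  have hγconv : Filter.Tendsto (fun j => cfVal (cfList g j)) Filter.atTop (nhds (2 + 1/αk)) := by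
    have hlist : ∀ j, cfList g (j+1) = 2 :: cfList (aSeq k) j := by
      intro j
      unfold cfList
      rw [List.range_succ_eq_map, List.map_cons]
      have hg0 : g 0 = 2 := by simp [hg_def]
      rw [hg0, List.map_map]
      congr 1
    have h2 : Filter.Tendsto (fun j => 2 + 1/cfVal (cfList (aSeq k) j)) Filter.atTop
        (nhds (2 + 1/αk)) :=
      tendsto_const_nhds.add (tendsto_const_nhds.div hαk' (ne_of_gt hα0))
    have h3 : Filter.Tendsto (fun j => cfVal (cfList g (j+1))) Filter.atTop (nhds (2 + 1/αk)) := by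
      refine h2.congr fun j => ?_
      rw [hlist j, cfVal_cons 2 _ (cfList_ne_nil _ _)]
      norm_num
    exact (tendsto_add_atTop_iff_nat 1).mp h3
  refine Filter.eventually_atTop.mpr ⟨2, fun m hm => ?_⟩
  have hkm : 4 ≤ 2*k*m := by nlinarith
  set n₀ := 2*k*m - 2 with hn₀def
  have hn2km : n₀ + 2 = 2*k*m := by
    rw [hn₀def, Nat.sub_add_cancel (le_trans (by norm_num) hkm)]
  set T := k*m with hT
  have h4 : 4 ≤ 2*T := by rw [hT, ← mul_assoc]; exact hkm
  have hn2 : n₀ + 2 = 2*T := by rw [hn2km, hT, mul_assoc]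
  have hn₀2 : 2 ≤ n₀ := by omega
  have hdvd : 2*k ∣ n₀ + 2 := hn2km ▸ dvd_mul_right (2*k) m
  have hmod : (n₀ + 2) % (2*k) = 0 := Nat.dvd_iff_mod_eq_zero.mp hdvd
  have han1 : aSeq k (n₀ + 1) = 2 := by
    unfold aSeq
    rw [show n₀ + 1 + 1 = n₀ + 2 from rfl, hmod]
    norm_num
  have hashift : ∀ i, aSeq k (n₀ + 1 + i) = g i := by
    intro i
    have hmm : (n₀ + 1 + i + 1) % (2*k) = i % (2*k) := by
      rw [show n₀ + 1 + i + 1 = (n₀ + 2) + i from by ring, Nat.add_mod, hmod]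
      simp
    unfold aSeq
    rw [hg_def, hmm]
  -- tail formula
  have hτ : ∀ j, cfVal (cfList (aSeq k) (n₀ + 1 + j)) =
      (cfVal (cfList g j) * (Pc (aSeq k) (n₀+1) : ℝ) + (Pc (aSeq k) n₀ : ℝ)) /
      (cfVal (cfList g j) * (Qc (aSeq k) (n₀+1) : ℝ) + (Qc (aSeq k) n₀ : ℝ)) := by
    intro j
    have hlist : cfList (aSeq k) (n₀ + 1 + j) = cfList (aSeq k) n₀ ++ cfList g j := by
      unfold cfList
      rw [show n₀ + 1 + j + 1 = (n₀ + 1) + (j + 1) from by ring, List.range_add,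
        List.map_append, List.map_map]
      congr 1
      exact List.map_congr_left fun i _ => hashift i
    have hτ1 : 1 ≤ cfVal (cfList g j) := by
      rw [cfVal_eq_rcf]
      refine rcf_ge_one _ (mc_ne_nil (cfList_ne_nil _ _)) fun x hx => ?_
      simp only [mc, cfList, List.map_map, List.mem_map, List.mem_range] at hx
      obtain ⟨i, _, rfl⟩ := hx
      show (1:ℝ) ≤ ((g i : ℤ) : ℝ)
      exact_mod_cast hg i
    rw [cfVal_eq_rcf, hlist, mc_append, rcf_append _ _ (mc_ne_nil (cfList_ne_nil _ _)),
      ← cfVal_eq_rcf (cfList g j), L2 (aSeq k) ha n₀ _ hτ1]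
  have hαshift : Filter.Tendsto (fun j => cfVal (cfList (aSeq k) (n₀ + 1 + j)))
      Filter.atTop (nhds αk) := by
    have h := (tendsto_add_atTop_iff_nat (n₀+1)).mpr hαk'
    exact h.congr fun j => by rw [Nat.add_comm]
  have hu1 : (1:ℝ) ≤ (Qc (aSeq k) (n₀+1) : ℝ) := by exact_mod_cast Qc_pos (aSeq k) ha n₀
  have hv1 : (1:ℝ) ≤ (Qc (aSeq k) n₀ : ℝ) := by
    have h := Qc_pos (aSeq k) ha (n₀ - 1)
    rw [Nat.sub_add_cancel (by omega)] at h
    exact_mod_cast h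
  set γ : ℝ := 2 + 1/αk with hγdef
  have hγ2 : 2 < γ := by
    have : 0 < 1/αk := by positivity
    rw [hγdef]; linarith
  set u : ℝ := (Qc (aSeq k) (n₀+1) : ℝ) with hu_def
  set v : ℝ := (Qc (aSeq k) n₀ : ℝ) with hv_def
  set p : ℝ := (Pc (aSeq k) (n₀+1) : ℝ) with hp_def
  set p' : ℝ := (Pc (aSeq k) n₀ : ℝ) with hp'_def
  have hden : 0 < γ * u + v := by nlinarith
  have hRHS : Filter.Tendsto
      (fun j => (cfVal (cfList g j) * p + p') / (cfVal (cfList g j) * u + v))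
      Filter.atTop (nhds ((γ * p + p') / (γ * u + v))) :=
    Filter.Tendsto.div ((hγconv.mul_const p).add_const p')
      ((hγconv.mul_const u).add_const v) (ne_of_gt hden)
  have hkey : αk = (γ * p + p') / (γ * u + v) :=
    tendsto_nhds_unique hαshift (hRHS.congr fun j => (hτ j).symm)
  -- determinant
  have hoddn1 : Odd (n₀ + 1) := ⟨T - 1, by omega⟩
  have hdetZ : Pc (aSeq k) (n₀+1) * Qc (aSeq k) n₀ - Pc (aSeq k) n₀ * Qc (aSeq k) (n₀+1)
      = -1 := (det_eq (aSeq k) n₀).trans (Odd.neg_one_pow hoddn1)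
  have hdetR : p * v - p' * u = -1 := by
    rw [hp_def, hv_def, hp'_def, hu_def]
    exact_mod_cast congrArg (fun z : ℤ => (z : ℝ)) hdetZ
  have hne : γ * u + v ≠ 0 := ne_of_gt hden
  have hx : u * αk = p + 1/(γ * u + v) := by
    rw [hkey]
    field_simp
    linear_combination -hdetR
  have hgt2 : 2 < γ * u + v := by nlinarith
  have hδpos : 0 < 1/(γ * u + v) := by positivity
  have hδhalf : 1/(γ * u + v) < 1/2 := by
    apply one_div_lt_one_div_of_lt <;> linarith
  have hround : round (u * αk) = Pc (aSeq k) (n₀+1) := by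
    rw [round_eq]
    have he : u * αk + 1/2 = (1/(γ * u + v) + 1/2) + (Pc (aSeq k) (n₀+1) : ℝ) := by
      rw [hx, hp_def]; ring
    rw [he, Int.floor_add_intCast, Int.floor_eq_zero_iff.mpr ⟨by linarith, by linarith⟩, zero_add]
  -- palindrome and crux
  have hpal : Qc (aSeq k) (n₀+1) = Pc (aSeq k) n₀ := by
    rw [← Kc_Lb, ← Kc_reverse (Lb (aSeq k) n₀), palindrome k hk n₀ (by omega) hdvd,
      Kc_cfList, Nat.sub_add_cancel (by omega)]
  have hoddn : Odd (n₀ - 1) := ⟨T - 2, by omega⟩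
  have hcrux : αk * v < u := by
    have hlt := odd_conv_gt (aSeq k) ha αk hconv (n₀ - 1) hoddn
    rw [Nat.sub_add_cancel (by omega : 1 ≤ n₀)] at hlt
    have hv0 : (0:ℝ) < v := by linarith
    rw [← hp'_def, ← hv_def, lt_div_iff₀ hv0] at hlt
    have hup : u = p' := by rw [hu_def, hp'_def]; exact_mod_cast hpal
    rw [hup]
    linarith
  -- final inequality
  show (cfDen (aSeq k) (n₀ + 1) : ℝ) * intDist ((cfDen (aSeq k) n₀ : ℝ) * αk) < Dk αk
  rw [cfDen_eq_Qc, cfDen_eq_Qc, ← hu_def]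
  have hw : (Qc (aSeq k) (n₀ + 1 + 1) : ℝ) = 2 * u + v := by
    rw [show n₀ + 1 + 1 = n₀ + 2 from rfl, Qc_rec_cast, han1, ← hu_def, ← hv_def]
    norm_num
  rw [hw]
  unfold intDist Dk
  rw [hround]
  rw [show u * αk - ((Pc (aSeq k) (n₀+1) : ℤ) : ℝ) = 1/(γ * u + v) from by
    rw [← hp_def]; linarith [hx]]
  rw [abs_of_pos hδpos, mul_one_div, div_lt_div_iff₀ hden (by linarith : (0:ℝ) < 2 * αk + 2)]
  have h1 : v < u / αk := (lt_div_iff₀ hα0).mpr (by linarith)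
  have expand : (2 * αk + 1) * (γ * u + v) - (2 * u + v) * (2 * αk + 2) = u / αk - v := by
    rw [hγdef]; field_simp; ring
  clear_value γ u v p p'
  linarith
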